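/- Entangled structure under general softmax self-attention, concrete form (Theorem 3.10): Fix a real number a ≠ 0 and for t > 0 define f_t : ℝ → ℝ by f_t(x) = 1/(1 + t·exp(−a·x)). Then there do NOT exist a natural number d, a map φ₀ : ℝ → ℝ^d, and a map ω : (0, ∞) → ℝ^d such that f_t(x) = ⟨ω(t), φ₀(x)⟩ for all t > 0 and all x ∈ ℝ. -/

import Mathlib

/-!
Logistic functions with distinct parameters `t` are linearly independent: the substitution
`u = exp (-a x)` turns them into the partial fractions `t⁻¹ / (u + t⁻¹)`, and if
`∑ c j / (u - v j)` vanishes at infinitely many points then, by the barycentric formula, so does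
the Lagrange interpolant of the values `c j / w j` (`w` the nodal weights), which is thus `0`.
A decomposition `f_t(x) = ⟨ω t, φ₀ x⟩` would make `d + 1` of them the images of vectors of
`ℝ^d` under one linear map, hence linearly dependent.
-/

open Matrix Real Polynomial Lagrange Finset Function

theorem linearIndependent_inv_sub {F ι : Type*} [Field F] [Fintype ι] {v : ι → F}
    (hv : Injective v) {S : Set F} (hS : S.Infinite) :
    LinearIndependent F fun i (x : S) => ((x : F) - v i)⁻¹ := by
  classical
  rw [Fintype.linearIndependent_iff]
  intro c hc i
  have hw : ∀ j, nodalWeight univ v j ≠ 0 := fun j => nodalWeight_ne_zero hv.injOn (mem_univ j)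
  set r : ι → F := fun j => c j / nodalWeight univ v j
  have hP : interpolate univ v r = 0 := by
    refine eq_zero_of_infinite_isRoot _ ((hS.sdiff (Set.finite_range v)).mono ?_)
    rintro x ⟨hxS, hxv⟩
    have hx : ∀ j ∈ univ, x ≠ v j := fun j _ hj => hxv ⟨j, hj.symm⟩
    have hcx := congrFun hc ⟨x, hxS⟩
    simp only [Finset.sum_apply, Pi.smul_apply, smul_eq_mul, Pi.zero_apply] at hcx
    rw [Set.mem_ofPred_eq, IsRoot, eval_interpolate_not_at_node r hx]
    convert mul_zero _ using 2
    rw [← hcx]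
    refine sum_congr rfl fun j _ => ?_
    simp only [r]
    field_simp [hw j]
  have hri : r i = 0 := by rw [← eval_interpolate_at_node r hv.injOn (mem_univ i), hP, eval_zero]
  simpa [r, hw i] using hri

-- Also at `x = -t⁻¹`, where both sides are `0⁻¹ = 0`.
theorem inv_one_add_mul_eq_inv_mul_inv_add {F : Type*} [Field F] {t : F} (ht : t ≠ 0) (x : F) :
    (1 + t * x)⁻¹ = t⁻¹ * (x + t⁻¹)⁻¹ := by
  rw [← mul_inv, mul_add, mul_inv_cancel₀ ht, add_comm]

theorem linearIndependent_inv_one_add_mul {F ι : Type*} [Field F] [Fintype ι] {t : ι → F}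
    (ht : ∀ i, t i ≠ 0) (ht_inj : Injective t) {S : Set F} (hS : S.Infinite) :
    LinearIndependent F fun i (x : S) => (1 + t i * x)⁻¹ := by
  have hv : Injective fun i => -(t i)⁻¹ := fun i j hij => ht_inj (by simpa using hij)
  convert (linearIndependent_inv_sub hv hS).units_smul fun i => (Units.mk0 (t i) (ht i))⁻¹ with i x
  simp [inv_one_add_mul_eq_inv_mul_inv_add (ht i), Units.smul_def]

theorem linearIndependent_logistic {ι : Type*} [Fintype ι] {a : ℝ} (ha : a ≠ 0) {t : ι → ℝ}
    (ht : ∀ i, t i ≠ 0) (ht_inj : Injective t) :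
    LinearIndependent ℝ fun i (x : ℝ) => 1 / (1 + t i * exp (-a * x)) := by
  let e : ℝ → Set.Ioi (0 : ℝ) := fun x => ⟨exp (-a * x), exp_pos _⟩
  have he : Surjective e := by
    rintro ⟨u, hu⟩
    refine ⟨-log u / a, Subtype.ext ?_⟩
    simp [e, mul_div_cancel₀ _ ha, exp_log hu]
  have hfun : (fun i (x : ℝ) => 1 / (1 + t i * exp (-a * x))) =
      LinearMap.funLeft ℝ ℝ e ∘ fun i (u : Set.Ioi (0 : ℝ)) => (1 + t i * u)⁻¹ := by
    funext i x
    simp [e, one_div]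
  rw [hfun]
  exact (linearIndependent_inv_one_add_mul ht ht_inj (Set.Ioi_infinite 0)).map'
    _ (LinearMap.ker_eq_bot.2 (LinearMap.funLeft_injective_of_surjective _ _ _ he))

theorem card_le_of_linearIndependent_dotProduct {K ι X : Type*} [Field K] [Fintype ι] {d : ℕ}
    (w : ι → Fin d → K) (φ : X → Fin d → K)
    (h : LinearIndependent K fun i x => w i ⬝ᵥ φ x) : Fintype.card ι ≤ d := by
  have hw : LinearIndependent K w := by
    refine .of_comp (Matrix.mulVecLin (Matrix.of φ)) ?_
    convert h using 1
    funext i x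
    simp [Matrix.mulVec, dotProduct_comm]
  simpa using hw.fintype_card_le_finrank

/-- Entangled structure under general softmax self-attention, concrete form
(Theorem 3.10): for `a ≠ 0`, the logistic family `f_t(x) = 1/(1 + t·e^{−ax})`,
`t > 0`, admits no bilinear decomposition `f_t(x) = ⟨ω(t), φ₀(x)⟩` with a fixed
finite-dimensional feature map `φ₀` and context-only coefficients `ω`. -/
theorem no_bilinear_decomposition_of_softmax_attention (a : ℝ) (ha : a ≠ 0) :
    ¬ ∃ (d : ℕ) (φ₀ : ℝ → (Fin d → ℝ)) (ω : ℝ → (Fin d → ℝ)),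
        ∀ t : ℝ, 0 < t → ∀ x : ℝ,
          1 / (1 + t * exp (-a * x)) = ω t ⬝ᵥ φ₀ x := by
  rintro ⟨d, φ₀, ω, h⟩
  let t : Fin (d + 1) → ℝ := fun j => j + 1
  have ht_pos (j) : 0 < t j := by positivity
  have ht_inj : Injective t := fun i j hij => Fin.ext (by simpa [t] using hij)
  have hli := linearIndependent_logistic ha (fun j => (ht_pos j).ne') ht_inj
  simp only [h _ (ht_pos _)] at hli
  simpa using card_le_of_linearIndependent_dotProduct _ _ hli
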